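/- If an n × n matrix A over a field has nonzero determinant and its upper-left m × m submatrix is the zero matrix, then n ≥ 2m. -/
import Mathlib


/-- If an `n × n` matrix over a field has nonzero determinant and its upper-left `m × m`
submatrix is zero (where `m ≤ n`), then `n ≥ 2 * m`. -/
theorem det_ne_zero_zero_block_dim_bound
    {F : Type*} [Field F] {n m : ℕ} (hmn : m ≤ n)
    (A : Matrix (Fin n) (Fin n) F)
    (hzero : ∀ i j : Fin n, (i : ℕ) < m → (j : ℕ) < m → A i j = 0)
    (hdet : A.det ≠ 0) :
    n ≥ 2 * m := by
  classical
  have hA : IsUnit A := (Matrix.isUnit_iff_isUnit_det A).mpr (isUnit_iff_ne_zero.mpr hdet)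
  have hrows : LinearIndependent F (fun i => A i) :=
    Matrix.linearIndependent_rows_iff_isUnit.mpr hA
  set v : Fin m → (Fin n → F) := fun i => A (Fin.castLE hmn i) with hv
  have hvind : LinearIndependent F v :=
    hrows.comp (Fin.castLE hmn) (Fin.castLE_injective hmn)
  set π : (Fin n → F) →ₗ[F] (Fin m → F) := LinearMap.funLeft F F (Fin.castLE hmn) with hπ
  have hmem : ∀ i, v i ∈ LinearMap.ker π := by
    intro i
    rw [LinearMap.mem_ker]
    funext j
    exact hzero _ _ (by simp) (by simp)
  have hspan : Submodule.span F (Set.range v) ≤ LinearMap.ker π := by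
    rw [Submodule.span_le]
    rintro _ ⟨i, rfl⟩
    exact hmem i
  have h1 : m ≤ Module.finrank F (LinearMap.ker π) := by
    calc m = Module.finrank F (Submodule.span F (Set.range v)) := by
            rw [finrank_span_eq_card hvind]; simp
      _ ≤ Module.finrank F (LinearMap.ker π) := Submodule.finrank_mono hspan
  have hsurj : Function.Surjective π :=
    LinearMap.funLeft_surjective_of_injective F F _ (Fin.castLE_injective hmn)
  have hrange : Module.finrank F (LinearMap.range π) = m := by
    rw [LinearMap.range_eq_top.mpr hsurj, finrank_top]
    simp
  have hrn := LinearMap.finrank_range_add_finrank_ker π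
  rw [hrange] at hrn
  simp only [Module.finrank_pi, Fintype.card_fin] at hrn
  omega
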